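/- arXiv:2109.10923 — 2 statements merged into one kernel-verified Lean document; each statement's English description precedes it below -/
import Mathlib

section
/- Let M_A, M_B ∈ SU(1,1) be reflection matrices (Tr M_A = Tr M_B = 0) that do not commute. Then their product M_C = M_A·M_B is hyperbolic, i.e. |Tr(M_A·M_B)| > 2. -/
/-!
A traceless element of `SU(1,1)` is `!![A * I, b; conj b, -(A * I)]` with `A ^ 2 - ‖b‖ ^ 2 = 1`,
i.e. a unit timelike vector `(A, b)` of the Minkowski space `ℝ^{1,2}`. The trace of the product of
two such matrices is twice the Minkowski inner product of their vectors, and the reversed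
Cauchy–Schwarz inequality for timelike vectors makes its square exceed `1` unless the vectors are
proportional, in which case the matrices commute.
-/

open Complex Matrix ComplexConjugate

section Minkowski

/-- Lagrange-type identity behind the reversed Cauchy–Schwarz inequality in `ℝ^{1,2} = ℝ × ℂ`. -/
theorem sq_mul_minkowski_inner_sq_sub (A C : ℝ) (b d : ℂ) :
    A ^ 2 * (((conj b * d).re - A * C) ^ 2 - (A ^ 2 - ‖b‖ ^ 2) * (C ^ 2 - ‖d‖ ^ 2)) =
      (A ^ 2 - ‖b‖ ^ 2) * ‖A * d - C * b‖ ^ 2 + (conj b * (A * d - C * b)).re ^ 2 := by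
  simp only [Complex.sq_norm, normSq_apply, mul_re, mul_im, sub_re, sub_im, conj_re, conj_im,
    ofReal_re, ofReal_im]
  ring

theorem one_lt_minkowski_inner_sq {A C : ℝ} {b d : ℂ} (hu : A ^ 2 - ‖b‖ ^ 2 = 1)
    (hv : C ^ 2 - ‖d‖ ^ 2 = 1) (hne : (A : ℂ) * d ≠ C * b) :
    1 < ((conj b * d).re - A * C) ^ 2 := by
  have key := sq_mul_minkowski_inner_sq_sub A C b d
  rw [hu, hv, one_mul, one_mul] at key
  have hdiff : 0 < ‖(A : ℂ) * d - C * b‖ ^ 2 := by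
    have := sub_ne_zero.mpr hne
    positivity
  have hprod : 0 < A ^ 2 * (((conj b * d).re - A * C) ^ 2 - 1) := by
    rw [key]
    positivity
  linarith [pos_of_mul_pos_right hprod (sq_nonneg A)]

end Minkowski

section Reflection

def reflectionMatrix (A : ℝ) (b : ℂ) : Matrix (Fin 2) (Fin 2) ℂ :=
  !![A * I, b; conj b, -(A * I)]

theorem re_eq_zero_of_trace_eq_zero {a b : ℂ} (h : (!![a, b; conj b, conj a]).trace = 0) :
    a.re = 0 := by
  simpa [Matrix.trace, add_conj] using h

theorem eq_reflectionMatrix {a : ℂ} (ha : a.re = 0) (b : ℂ) :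
    !![a, b; conj b, conj a] = reflectionMatrix a.im b := by
  have h : a = a.im * I := Complex.ext (by simp [ha]) (by simp)
  rw [reflectionMatrix, ← h]
  congr
  rw [h]
  simp

theorem trace_reflectionMatrix_mul (A C : ℝ) (b d : ℂ) :
    (reflectionMatrix A b * reflectionMatrix C d).trace = (2 * ((conj b * d).re - A * C) : ℝ) := by
  apply Complex.ext <;> simp [reflectionMatrix, Matrix.trace, Fin.sum_univ_two] <;> ring

theorem reflectionMatrix_mul_mul (r A : ℝ) (b : ℂ) :
    reflectionMatrix (r * A) (r * b) = (r : ℂ) • reflectionMatrix A b := by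
  ext i j
  fin_cases i <;> fin_cases j <;> simp [reflectionMatrix] <;> ring

theorem reflectionMatrix_commute {A C : ℝ} {b d : ℂ} (hA : A ≠ 0) (h : (A : ℂ) * d = C * b) :
    Commute (reflectionMatrix A b) (reflectionMatrix C d) := by
  have hd : d = (C / A : ℝ) * b := by
    rw [ofReal_div, div_mul_eq_mul_div, ← h, mul_div_cancel_left₀ _ (ofReal_ne_zero.mpr hA)]
  have hsmul : reflectionMatrix C d = ((C / A : ℝ) : ℂ) • reflectionMatrix A b := by
    rw [← reflectionMatrix_mul_mul, div_mul_cancel₀ C hA, ← hd]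
  rw [hsmul]
  exact (Commute.refl _).smul_right _

end Reflection

/-- The product of two non-commuting traceless (reflection) `SU(1,1)` matrices
is hyperbolic: `|Tr(M_A · M_B)| > 2`. -/
theorem reflections_product_hyperbolic (a b c d : ℂ)
    (hA : ‖a‖ ^ 2 - ‖b‖ ^ 2 = 1)
    (hB : ‖c‖ ^ 2 - ‖d‖ ^ 2 = 1)
    (MA MB : Matrix (Fin 2) (Fin 2) ℂ)
    (hMA : MA = !![a, b; (starRingEnd ℂ) b, (starRingEnd ℂ) a])
    (hMB : MB = !![c, d; (starRingEnd ℂ) d, (starRingEnd ℂ) c])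
    (htA : MA.trace = 0) (htB : MB.trace = 0)
    (hcom : MA * MB ≠ MB * MA) :
    ‖(MA * MB).trace‖ > 2 := by
  subst hMA hMB
  have ha := re_eq_zero_of_trace_eq_zero htA
  have hc := re_eq_zero_of_trace_eq_zero htB
  rw [eq_reflectionMatrix ha, eq_reflectionMatrix hc] at hcom ⊢
  rw [← abs_im_eq_norm.mpr ha, sq_abs] at hA
  rw [← abs_im_eq_norm.mpr hc, sq_abs] at hB
  have hA0 : a.im ≠ 0 := by
    intro h
    nlinarith [h ▸ hA, sq_nonneg ‖b‖]
  have hne : (a.im : ℂ) * d ≠ c.im * b := fun h => hcom (reflectionMatrix_commute hA0 h).eq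
  rw [trace_reflectionMatrix_mul, norm_real, Real.norm_eq_abs, abs_mul, abs_two]
  have := one_lt_sq_iff_one_lt_abs _ |>.mp (one_lt_minkowski_inner_sq hA hB hne)
  linarith
end

section
/- Let φ > 0 be fixed. Then lim_{k→∞} (1/(2k)) · 4^(−k) · Σ_{r=0}^{k} Σ_{s=0}^{k} C(k,r)·C(k,s)·log(2·cosh(2(k−r−s)φ)) = 0. In other words, the Lyapunov exponent of the random product of reflection matrices at a type-I exceptional point vanishes. -/
open Finset Filter


-- ∑ r·C(k,r) = k·2^k / 2  (nat version, multiplied by 2)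
lemma nat_sum_mul_choose (k : ℕ) :
    2 * ∑ r ∈ Finset.range (k+1), r * k.choose r = k * 2^k := by
  cases k with
  | zero => decide
  | succ m =>
    rw [Finset.sum_range_succ']
    simp only [Nat.zero_mul, add_zero]
    have h : ∀ i, (i+1) * (m+1).choose (i+1) = (m+1) * m.choose i := by
      intro i
      have h2 := Nat.add_one_mul_choose_eq m i
      calc (i+1) * (m+1).choose (i+1) = (m+1).choose (i+1) * (i+1) := by ring
        _ = (m+1) * m.choose i := h2.symm
    rw [Finset.sum_congr rfl fun i _ => h i, ← Finset.mul_sum, Nat.sum_range_choose]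
    ring

lemma nat_sum_mul2_choose (k : ℕ) :
    4 * ∑ r ∈ Finset.range (k+1), r * (r-1) * k.choose r = k * (k-1) * 2^k := by
  match k with
  | 0 => decide
  | 1 => decide
  | (m+2) =>
    rw [Finset.sum_range_succ', Finset.sum_range_succ']
    simp only [Nat.zero_mul, Nat.mul_zero, add_zero, Nat.sub_self, Nat.mul_one]
    have h : ∀ j, (j+2) * ((j+2)-1) * (m+2).choose (j+2) = (m+2) * ((m+1) * m.choose j) := by
      intro j
      have h1 := Nat.add_one_mul_choose_eq (m+1) (j+1)
      have h2 := Nat.add_one_mul_choose_eq m j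
      have hs : (j+2) - 1 = j+1 := rfl
      rw [hs]
      calc (j+2) * (j+1) * (m+2).choose (j+2)
          = ((m+2).choose (j+2) * (j+2)) * (j+1) := by ring
        _ = ((m+2) * (m+1).choose (j+1)) * (j+1) := by rw [← h1]
        _ = (m+2) * ((m+1).choose (j+1) * (j+1)) := by ring
        _ = (m+2) * ((m+1) * m.choose j) := by rw [← h2]
    rw [Finset.sum_congr rfl fun j _ => h j, ← Finset.mul_sum, ← Finset.mul_sum,
      Nat.sum_range_choose]
    have : (m+2) - 1 = m+1 := rfl
    rw [this]
    ring

lemma real_sum_choose (k : ℕ) :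
    ∑ r ∈ Finset.range (k+1), (k.choose r : ℝ) = 2^k := by
  exact_mod_cast congrArg (Nat.cast : ℕ → ℝ) (Nat.sum_range_choose k)

lemma real_sum_mul_choose (k : ℕ) :
    ∑ r ∈ Finset.range (k+1), (r : ℝ) * k.choose r = k * 2^k / 2 := by
  have h := congrArg (Nat.cast : ℕ → ℝ) (nat_sum_mul_choose k)
  push_cast at h
  linarith

lemma real_sum_sq_choose (k : ℕ) :
    ∑ r ∈ Finset.range (k+1), (r : ℝ)^2 * k.choose r = k * (k+1) * 2^k / 4 := by
  have h2 : (4:ℝ) * ∑ r ∈ Finset.range (k+1), ((r * (r-1) * k.choose r : ℕ) : ℝ)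
      = ((k * (k-1) * 2^k : ℕ) : ℝ) := by
    rw [← Nat.cast_sum]
    exact_mod_cast congrArg (Nat.cast : ℕ → ℝ) (nat_sum_mul2_choose k)
  have key : ∑ r ∈ Finset.range (k+1), ((r * (r-1) * k.choose r : ℕ) : ℝ)
      = ∑ r ∈ Finset.range (k+1), ((r:ℝ)^2 * k.choose r - (r:ℝ) * k.choose r) := by
    refine Finset.sum_congr rfl fun r _ => ?_
    cases r with
    | zero => simp
    | succ n => push_cast [Nat.succ_sub_one]; ring
  rw [key, Finset.sum_sub_distrib, real_sum_mul_choose] at h2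
  cases k with
  | zero => simpa using h2
  | succ n =>
    push_cast [Nat.succ_sub_one] at h2 ⊢
    linarith

lemma sum_choose_sq_shift (k : ℕ) (A : ℝ) :
    ∑ s ∈ Finset.range (k+1), (k.choose s : ℝ) * (A - s)^2
      = 2^k * (A^2 - A*k + k*(k+1)/4) := by
  have expand : ∀ s ∈ Finset.range (k+1), (k.choose s : ℝ) * (A - s)^2
      = A^2 * (k.choose s : ℝ) - (2*A) * ((s:ℝ) * k.choose s) + (s:ℝ)^2 * k.choose s := by
    intro s _; ring
  rw [Finset.sum_congr rfl expand, Finset.sum_add_distrib, Finset.sum_sub_distrib,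
    ← Finset.mul_sum, ← Finset.mul_sum, real_sum_choose, real_sum_mul_choose,
    real_sum_sq_choose]
  ring

lemma dbl_sum_sq (k : ℕ) :
    ∑ r ∈ Finset.range (k+1), ∑ s ∈ Finset.range (k+1),
      (k.choose r : ℝ) * (k.choose s : ℝ) * ((k:ℝ) - r - s)^2 = 4^k * k / 2 := by
  have inner : ∀ r ∈ Finset.range (k+1),
      ∑ s ∈ Finset.range (k+1), (k.choose r : ℝ) * (k.choose s : ℝ) * ((k:ℝ) - r - s)^2
        = 2^k * ((r:ℝ)^2 * (k.choose r : ℝ) - (k:ℝ) * ((r:ℝ) * k.choose r)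
            + (k*(k+1)/4) * (k.choose r : ℝ)) := by
    intro r _
    have : ∑ s ∈ Finset.range (k+1), (k.choose r : ℝ) * (k.choose s : ℝ) * ((k:ℝ) - r - s)^2
        = (k.choose r : ℝ) * ∑ s ∈ Finset.range (k+1), (k.choose s : ℝ) * (((k:ℝ) - r) - s)^2 := by
      rw [Finset.mul_sum]
      exact Finset.sum_congr rfl fun s _ => by ring
    rw [this, sum_choose_sq_shift]
    ring
  rw [Finset.sum_congr rfl inner, ← Finset.mul_sum, Finset.sum_add_distrib,
    Finset.sum_sub_distrib, ← Finset.mul_sum, ← Finset.mul_sum,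
    real_sum_choose, real_sum_mul_choose, real_sum_sq_choose]
  have h4 : (4:ℝ)^k = 2^k * 2^k := by rw [← mul_pow]; norm_num
  rw [h4]; ring

lemma dbl_sum_choose (k : ℕ) :
    ∑ r ∈ Finset.range (k+1), ∑ s ∈ Finset.range (k+1),
      (k.choose r : ℝ) * (k.choose s : ℝ) = 4^k := by
  have h4 : (4:ℝ)^k = 2^k * 2^k := by rw [← mul_pow]; norm_num
  rw [h4, ← real_sum_choose k, ← Finset.sum_mul_sum]

lemma log_two_cosh_le (x : ℝ) : Real.log (2 * Real.cosh x) ≤ Real.log 2 + |x| := by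
  have h1 : 2 * Real.cosh x ≤ 2 * Real.exp |x| := by
    rw [Real.cosh_eq]
    have hx1 : Real.exp x ≤ Real.exp |x| := Real.exp_le_exp.2 (le_abs_self x)
    have hx2 : Real.exp (-x) ≤ Real.exp |x| := Real.exp_le_exp.2 (neg_le_abs x)
    linarith
  have hpos : 0 < 2 * Real.cosh x := by positivity
  calc Real.log (2 * Real.cosh x) ≤ Real.log (2 * Real.exp |x|) :=
        Real.log_le_log hpos h1
    _ = Real.log 2 + |x| := by
        rw [Real.log_mul two_ne_zero (Real.exp_ne_zero _), Real.log_exp]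

lemma log_two_cosh_nonneg (x : ℝ) : 0 ≤ Real.log (2 * Real.cosh x) := by
  apply Real.log_nonneg
  have := Real.one_le_cosh x
  linarith

lemma abs_le_amgm (m c : ℝ) (hc : 0 < c) : |m| ≤ m^2/(2*c) + c/2 := by
  have key : 2*c*|m| ≤ m^2 + c^2 := by nlinarith [sq_nonneg (|m| - c), sq_abs m]
  have heq : m^2/(2*c) + c/2 - |m| = (m^2 + c^2 - 2*c*|m|)/(2*c) := by
    field_simp
  nlinarith [div_nonneg (by linarith : (0:ℝ) ≤ m^2 + c^2 - 2*c*|m|) (by linarith : (0:ℝ) ≤ 2*c)]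

/-- The Lyapunov exponent of the random product of reflection matrices at a
type-I exceptional point vanishes:
`(1/(2k)) · 4⁻ᵏ · Σ_{r,s} C(k,r) C(k,s) log(2 cosh(2(k−r−s)φ)) → 0`. -/

theorem lyapunov_zero_typeI (φ : ℝ) (hφ : 0 < φ) :
    Tendsto (fun k : ℕ =>
      (1 / (2 * (k : ℝ))) * (4 : ℝ)⁻¹ ^ k *
        ∑ r ∈ Finset.range (k + 1), ∑ s ∈ Finset.range (k + 1),
          (k.choose r : ℝ) * (k.choose s : ℝ) *
            Real.log (2 * Real.cosh (2 * ((k : ℝ) - r - s) * φ)))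
      atTop (nhds 0) := by
  have hg : Tendsto (fun k : ℕ =>
      Real.log 2 * (1/(2*(k:ℝ))) + (3/4)*φ * (Real.sqrt k)⁻¹) atTop (nhds 0) := by
    have h1 : Tendsto (fun k : ℕ => (1:ℝ)/(2*(k:ℝ))) atTop (nhds 0) := by
      have h := tendsto_const_div_atTop_nhds_zero_nat ((1:ℝ)/2)
      refine h.congr fun n => ?_
      rw [div_div]
    have h2 : Tendsto (fun k : ℕ => (Real.sqrt (k:ℝ))⁻¹) atTop (nhds 0) := by
      apply Filter.Tendsto.inv_tendsto_atTop
      have hs : Tendsto Real.sqrt atTop atTop := by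
        rw [show Real.sqrt = fun x : ℝ => x ^ ((1:ℝ)/2) from funext Real.sqrt_eq_rpow]
        exact tendsto_rpow_atTop (by norm_num)
      exact hs.comp tendsto_natCast_atTop_atTop
    have := (h1.const_mul (Real.log 2)).add (h2.const_mul ((3/4)*φ))
    simpa using this
  apply squeeze_zero' ?_ ?_ hg
  · filter_upwards with k
    apply mul_nonneg (by positivity)
    refine Finset.sum_nonneg fun r _ => Finset.sum_nonneg fun s _ => ?_
    exact mul_nonneg (by positivity) (log_two_cosh_nonneg _)
  · filter_upwards [eventually_ge_atTop 1] with k hk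
    have hkpos : (0:ℝ) < (k:ℝ) := by exact_mod_cast hk
    set c := Real.sqrt (k:ℝ) with hcdef
    have hc : 0 < c := Real.sqrt_pos.2 hkpos
    have hcc : c * c = (k:ℝ) := Real.mul_self_sqrt (Nat.cast_nonneg k)
    have hsum : (∑ r ∈ Finset.range (k + 1), ∑ s ∈ Finset.range (k + 1),
          (k.choose r : ℝ) * (k.choose s : ℝ) *
            Real.log (2 * Real.cosh (2 * ((k : ℝ) - r - s) * φ)))
        ≤ (Real.log 2 + φ*c) * 4^k + (φ/c) * (4^k * k / 2) := by
      have step : ∀ r ∈ Finset.range (k+1), ∀ s ∈ Finset.range (k+1),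
          (k.choose r : ℝ) * (k.choose s : ℝ) *
            Real.log (2 * Real.cosh (2 * ((k : ℝ) - r - s) * φ))
          ≤ (Real.log 2 + φ*c) * ((k.choose r : ℝ) * (k.choose s : ℝ))
            + (φ/c) * ((k.choose r : ℝ) * (k.choose s : ℝ) * ((k:ℝ) - r - s)^2) := by
        intro r _ s _
        set m : ℝ := (k:ℝ) - r - s with hm
        have habs : |2 * m * φ| = 2 * |m| * φ := by
          rw [abs_mul, abs_mul, abs_of_pos hφ, abs_two]
        have hamgm := abs_le_amgm m c hc
        have heq : 2*φ*(m^2/(2*c) + c/2) = φ/c*m^2 + φ*c := by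
          field_simp
        have hb : Real.log (2 * Real.cosh (2 * m * φ))
            ≤ Real.log 2 + φ/c*m^2 + φ*c := by
          have h1 := log_two_cosh_le (2 * m * φ)
          rw [habs] at h1
          nlinarith [mul_le_mul_of_nonneg_left hamgm (by positivity : (0:ℝ) ≤ 2*φ)]
        calc (k.choose r : ℝ) * (k.choose s : ℝ) * Real.log (2 * Real.cosh (2 * m * φ))
            ≤ (k.choose r : ℝ) * (k.choose s : ℝ) * (Real.log 2 + φ/c*m^2 + φ*c) :=
              mul_le_mul_of_nonneg_left hb (by positivity)
          _ = (Real.log 2 + φ*c) * ((k.choose r : ℝ) * (k.choose s : ℝ))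
              + (φ/c) * ((k.choose r : ℝ) * (k.choose s : ℝ) * m^2) := by ring
      calc (∑ r ∈ Finset.range (k + 1), ∑ s ∈ Finset.range (k + 1),
            (k.choose r : ℝ) * (k.choose s : ℝ) *
              Real.log (2 * Real.cosh (2 * ((k : ℝ) - r - s) * φ)))
          ≤ ∑ r ∈ Finset.range (k + 1), ∑ s ∈ Finset.range (k + 1),
              ((Real.log 2 + φ*c) * ((k.choose r : ℝ) * (k.choose s : ℝ))
                + (φ/c) * ((k.choose r : ℝ) * (k.choose s : ℝ) * ((k:ℝ) - r - s)^2)) :=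
            Finset.sum_le_sum fun r hr => Finset.sum_le_sum fun s hs => step r hr s hs
        _ = (Real.log 2 + φ*c) * 4^k + (φ/c) * (4^k * k / 2) := by
            simp only [Finset.sum_add_distrib, ← Finset.mul_sum]
            rw [dbl_sum_sq, ← Finset.sum_mul, real_sum_choose]
            have h4 : (4:ℝ)^k = 2^k*2^k := by rw [← mul_pow]; norm_num
            rw [h4]
    calc (1 / (2 * (k : ℝ))) * (4 : ℝ)⁻¹ ^ k *
          ∑ r ∈ Finset.range (k + 1), ∑ s ∈ Finset.range (k + 1),
            (k.choose r : ℝ) * (k.choose s : ℝ) *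
              Real.log (2 * Real.cosh (2 * ((k : ℝ) - r - s) * φ))
        ≤ (1 / (2 * (k : ℝ))) * (4 : ℝ)⁻¹ ^ k *
            ((Real.log 2 + φ*c) * 4^k + (φ/c) * (4^k * k / 2)) :=
          mul_le_mul_of_nonneg_left hsum (by positivity)
      _ = Real.log 2 * (1/(2*(k:ℝ))) + (3/4)*φ * c⁻¹ := by
          rw [show ((k:ℕ):ℝ) = c*c from hcc.symm, inv_pow]
          have h4 : (4:ℝ)^k ≠ 0 := by positivity
          field_simp
          ring
end
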